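/- Every extreme point of the polytope of optimal solutions of the linear program max 1^T y subject to y ∈ cone{z_1,…,z_m} and y ≤ x is integer valued, where the z_j are the half-incidence vectors of the edges of a graph S possibly with self-loops and x ∈ ℕ^q. -/

import Mathlib

/-!
The optimal set `Y_x` is an exposed face of the feasible region `K = {y ∈ X | y ≤ x}`, so its
extreme points are extreme points of `K`. Write such a point as `y = M a` with `a ≥ 0` and let `i₀`
be slack, `y i₀ < x i₀`. Putting alternating weights `±1` on the edges of a walk from `i₀` to `j`
in the support of `a` produces a direction `(e_{i₀} ± e_j) / 2` along which `y` can move both ways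
inside `K` as long as `j` is slack too. Hence every vertex reachable from `i₀` by an odd walk, and
every vertex other than `i₀` reachable by an even walk, is tight. The weight `+1` on even and `-1` on
odd vertices changes sign along every support edge, so the even and odd parts of `y` have equal
sums, and `y i₀ = x(odd) - x(even \ {i₀})` is an integer.
-/

open Filter Topology Matrix Finset

theorem eq_zero_of_eventually_add_smul_mem_of_mem_extremePoints {W : Type*} [AddCommGroup W]
    [Module ℝ W] {K : Set W} {y v : W} (hy : y ∈ K.extremePoints ℝ)
    (hv : ∀ᶠ t in 𝓝 (0 : ℝ), y + t • v ∈ K) : v = 0 := by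
  have hv' : ∀ᶠ t in 𝓝 (0 : ℝ), y + t • v ∈ K ∧ y - t • v ∈ K := by
    refine hv.and ((continuous_neg.tendsto' 0 0 neg_zero).eventually hv |>.mono fun t ht => ?_)
    simpa [neg_smul, ← sub_eq_add_neg] using ht
  obtain ⟨t, ⟨hadd, hsub⟩, ht⟩ :=
    ((hv'.filter_mono (nhdsWithin_le_nhds (s := Set.Ioi 0))).and self_mem_nhdsWithin).exists
  have htv : t • v = 0 := add_eq_left.mp (hy.2 hadd hsub (mem_openSegment_add_sub y _))
  exact (smul_eq_zero.mp htv).resolve_left (ne_of_gt ht)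

theorem eventually_nonneg_add_smul {ι : Type*} [Finite ι] {u d : ι → ℝ} (hu : 0 ≤ u)
    (hd : ∀ i, u i = 0 → d i = 0) : ∀ᶠ t in 𝓝 (0 : ℝ), 0 ≤ u + t • d := by
  simp only [Pi.le_def, Pi.add_apply, Pi.smul_apply, smul_eq_mul, Pi.zero_apply]
  refine eventually_all.mpr fun i => ?_
  rcases (hu i).eq_or_lt with hui | hui
  · simp [hd i hui.symm, ← hui]
  · have hcont : Tendsto (fun t : ℝ => u i + t * d i) (𝓝 0) (𝓝 (u i)) :=
      (by fun_prop : Continuous fun t : ℝ => u i + t * d i).tendsto' 0 (u i) (by simp)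
    exact (hcont.eventually_const_lt hui).mono fun _ => le_of_lt

def Matrix.feasibleSet {V E : Type*} [Fintype E] (M : Matrix V E ℝ) (x : V → ℝ) :
    Set (V → ℝ) :=
  {y | (∃ a, 0 ≤ a ∧ M *ᵥ a = y) ∧ y ≤ x}

theorem Matrix.eventually_add_smul_mulVec_mem_feasibleSet {V E : Type*} [Finite V] [Fintype E]
    {M : Matrix V E ℝ} {x y : V → ℝ} {a c : E → ℝ} (ha : 0 ≤ a) (hya : M *ᵥ a = y)
    (hyx : y ≤ x) (hc : ∀ e, a e = 0 → c e = 0) (hMc : ∀ i, y i = x i → (M *ᵥ c) i = 0) :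
    ∀ᶠ t in 𝓝 (0 : ℝ), y + t • M *ᵥ c ∈ M.feasibleSet x := by
  have hbox := eventually_nonneg_add_smul (sub_nonneg.mpr hyx) (d := -(M *ᵥ c))
    fun i hi => by simp [hMc i (sub_eq_zero.mp hi).symm]
  filter_upwards [eventually_nonneg_add_smul ha hc, hbox] with t hat hyt
  refine ⟨⟨a + t • c, hat, by rw [mulVec_add, mulVec_smul, hya]⟩, ?_⟩
  have : x - (y + t • M *ᵥ c) = x - y + t • -(M *ᵥ c) := by module
  exact sub_nonneg.mp (this ▸ hyt)

section HalfIncidence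

variable {V E : Type*} [DecidableEq V]

noncomputable def halfIncidence (ep : E → V × V) : Matrix V E ℝ :=
  Matrix.of fun i e => ((if (ep e).1 = i then 1 else 0) + (if (ep e).2 = i then 1 else 0)) / 2

theorem halfIncidence_col (ep : E → V × V) (e : E) :
    (halfIncidence ep).col e = (2⁻¹ : ℝ) • (Pi.single (ep e).1 1 + Pi.single (ep e).2 1) := by
  ext i
  simp [halfIncidence, Pi.single_apply, eq_comm, div_eq_inv_mul]

theorem vecMul_halfIncidence [Fintype V] (ep : E → V × V) (g : V → ℝ) (e : E) :
    (g ᵥ* halfIncidence ep) e = (g (ep e).1 + g (ep e).2) / 2 := by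
  change g ⬝ᵥ (halfIncidence ep).col e = _
  rw [halfIncidence_col, dotProduct_smul, dotProduct_add, dotProduct_single, dotProduct_single]
  simp [div_eq_inv_mul]

theorem dotProduct_halfIncidence_mulVec_eq_zero [Fintype V] [Fintype E] {ep : E → V × V}
    {g : V → ℝ} {a : E → ℝ} (hg : ∀ e, a e ≠ 0 → g (ep e).2 = -g (ep e).1) :
    g ⬝ᵥ (halfIncidence ep *ᵥ a) = 0 := by
  rw [dotProduct_mulVec]
  refine sum_eq_zero fun e _ => ?_
  rw [vecMul_halfIncidence]
  by_cases hae : a e = 0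
  · simp [hae]
  · simp [hg e hae]

/-- `ParityReach ep P i₀ odd j`: `j` is reached from `i₀` by a walk along `P`-edges whose
length has parity `odd`. -/
inductive ParityReach (ep : E → V × V) (P : E → Prop) (i₀ : V) : Bool → V → Prop
  | refl : ParityReach ep P i₀ false i₀
  | step {odd : Bool} {u v : V} {e : E} : ParityReach ep P i₀ odd u → P e →
      ep e = (u, v) ∨ ep e = (v, u) → ParityReach ep P i₀ (!odd) v

namespace ParityReach

variable {ep : E → V × V} {P : E → Prop} {i₀ : V}

omit [DecidableEq V] in
theorem iff_of_joins {odd : Bool} {u v : V} {e : E} (he : P e)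
    (huv : ep e = (u, v) ∨ ep e = (v, u)) :
    ParityReach ep P i₀ odd u ↔ ParityReach ep P i₀ (!odd) v :=
  ⟨fun h => h.step he huv, fun h => by simpa using h.step he huv.symm⟩

theorem exists_mulVec_eq [DecidableEq E] [Fintype E] {odd : Bool} {j : V}
    (h : ParityReach ep P i₀ odd j) :
    ∃ c : E → ℝ, (∀ e, c e ≠ 0 → P e) ∧ halfIncidence ep *ᵥ c =
      (2⁻¹ : ℝ) • (Pi.single i₀ 1 + (if odd then 1 else -1 : ℝ) • Pi.single j 1) := by
  induction h with
  | refl => exact ⟨0, by simp, by simp⟩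
  | @step odd u v e _ he huv ih =>
    obtain ⟨c, hcP, hc⟩ := ih
    set s : ℝ := if odd then 1 else -1
    refine ⟨c - s • Pi.single e 1, fun e' hne => ?_, ?_⟩
    · by_cases he' : e' = e
      · exact he' ▸ he
      · exact hcP e' (by simpa [he'] using hne)
    · have hs : (if !odd then 1 else -1 : ℝ) = -s := by cases odd <;> norm_num [s]
      rw [mulVec_sub, mulVec_smul, mulVec_single_one, halfIncidence_col, hc, hs]
      rcases huv with huv | huv <;> rw [huv] <;> module

theorem sum_even_eq_sum_odd [Fintype V] [Fintype E]
    [DecidablePred (ParityReach ep P i₀ false)] [DecidablePred (ParityReach ep P i₀ true)]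
    {a : E → ℝ} (ha : ∀ e, a e ≠ 0 → P e) :
    ∑ j with ParityReach ep P i₀ false j, (halfIncidence ep *ᵥ a) j =
      ∑ j with ParityReach ep P i₀ true j, (halfIncidence ep *ᵥ a) j := by
  set g : V → ℝ := fun j =>
    (if ParityReach ep P i₀ false j then 1 else 0) - (if ParityReach ep P i₀ true j then 1 else 0)
  have hg : g ⬝ᵥ (halfIncidence ep *ᵥ a) = 0 := by
    refine dotProduct_halfIncidence_mulVec_eq_zero fun e hae => ?_
    have huv : ep e = ((ep e).1, (ep e).2) ∨ ep e = ((ep e).2, (ep e).1) := Or.inl rfl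
    have heven : ParityReach ep P i₀ false (ep e).2 ↔ ParityReach ep P i₀ true (ep e).1 :=
      (iff_of_joins (odd := true) (ha e hae) huv).symm
    have hodd : ParityReach ep P i₀ true (ep e).2 ↔ ParityReach ep P i₀ false (ep e).1 :=
      (iff_of_joins (odd := false) (ha e hae) huv).symm
    simp only [g, heven, hodd]
    ring
  rw [← sub_eq_zero, ← hg, sum_filter, sum_filter, ← sum_sub_distrib]
  refine sum_congr rfl fun j _ => ?_
  simp only [g]
  split_ifs <;> ring

variable [Fintype V] [Fintype E] [DecidableEq E] {x y : V → ℝ} {a : E → ℝ}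

theorem eq_of_mem_extremePoints (hy : y ∈ ((halfIncidence ep).feasibleSet x).extremePoints ℝ)
    (ha : 0 ≤ a) (hya : halfIncidence ep *ᵥ a = y) (hyx : y ≤ x) (hi₀ : y i₀ ≠ x i₀)
    {odd : Bool} {j : V} (h : ParityReach ep (a · ≠ 0) i₀ odd j) (hj : odd = true ∨ j ≠ i₀) :
    y j = x j := by
  by_contra hjx
  obtain ⟨c, hcP, hc⟩ := h.exists_mulVec_eq
  have hzero : halfIncidence ep *ᵥ c = 0 := by
    refine eq_zero_of_eventually_add_smul_mem_of_mem_extremePoints hy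
      (eventually_add_smul_mulVec_mem_feasibleSet ha hya hyx
        (fun e => not_imp_not.mp (hcP e)) fun i hi => ?_)
    have h1 : i ≠ i₀ := fun h => hi₀ (h ▸ hi)
    have h2 : i ≠ j := fun h => hjx (h ▸ hi)
    cases odd <;> simp [hc, Pi.single_eq_of_ne h1, Pi.single_eq_of_ne h2]
  have hcomp := congrFun (hc.symm.trans hzero) i₀
  by_cases hji : j = i₀
  · subst hji
    obtain rfl : odd = true := by simpa using hj
    norm_num at hcomp
  · cases odd <;> simp [Pi.single_eq_of_ne' hji] at hcomp

open Classical in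
theorem eq_sum_odd_sub_sum_even (hy : y ∈ ((halfIncidence ep).feasibleSet x).extremePoints ℝ)
    (ha : 0 ≤ a) (hya : halfIncidence ep *ᵥ a = y) (hyx : y ≤ x) (hi₀ : y i₀ ≠ x i₀) :
    y i₀ = ∑ j with ParityReach ep (a · ≠ 0) i₀ true j, x j -
      ∑ j ∈ ({j | ParityReach ep (a · ≠ 0) i₀ false j} : Finset V).erase i₀, x j := by
  have hbal := sum_even_eq_sum_odd (P := (a · ≠ 0)) (i₀ := i₀) (ep := ep) fun _ hae => hae
  have hi₀_even : i₀ ∈ ({j | ParityReach ep (a · ≠ 0) i₀ false j} : Finset V) := by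
    simp [ParityReach.refl]
  rw [hya, ← add_sum_erase _ _ hi₀_even] at hbal
  have heven : ∑ j ∈ ({j | ParityReach ep (a · ≠ 0) i₀ false j} : Finset V).erase i₀, y j =
      ∑ j ∈ ({j | ParityReach ep (a · ≠ 0) i₀ false j} : Finset V).erase i₀, x j :=
    sum_congr rfl fun j hj => eq_of_mem_extremePoints hy ha hya hyx hi₀
      (mem_filter.mp (mem_of_mem_erase hj)).2 (Or.inr (ne_of_mem_erase hj))
  have hodd : ∑ j with ParityReach ep (a · ≠ 0) i₀ true j, y j =
      ∑ j with ParityReach ep (a · ≠ 0) i₀ true j, x j :=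
    sum_congr rfl fun j hj =>
      eq_of_mem_extremePoints hy ha hya hyx hi₀ (mem_filter.mp hj).2 (Or.inl rfl)
  linarith

end ParityReach

theorem exists_int_eq_of_mem_extremePoints_feasibleSet [Fintype V] [Fintype E] {ep : E → V × V}
    {x y : V → ℝ} (hx : ∀ i, ∃ n : ℤ, x i = n)
    (hy : y ∈ ((halfIncidence ep).feasibleSet x).extremePoints ℝ) (i : V) :
    ∃ n : ℤ, y i = n := by
  classical
  obtain ⟨⟨a, ha, hya⟩, hyx⟩ := hy.1
  by_cases hi : y i = x i
  · exact hi ▸ hx i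
  choose n hn using hx
  rw [ParityReach.eq_sum_odd_sub_sum_even hy ha hya hyx hi]
  simp_rw [hn, ← Int.cast_sum, ← Int.cast_sub]
  exact ⟨_, rfl⟩

end HalfIncidence

/-- Every extreme point of the polytope of optimal solutions of the LP
`max 1ᵀy s.t. y ∈ cone{z_1,…,z_m}, y ≤ x` is integer valued, where the `z_j` are
the half-incidence vectors of the edges of a graph `S` possibly with self-loops
and `x ∈ ℕ^q`. -/
theorem extreme_points_of_Yx_integral
    (q m : ℕ) (ep : Fin m → Fin q × Fin q) (x : Fin q → ℕ)
    (y : Fin q → ℝ)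
    (hy : y ∈ Set.extremePoints ℝ
      {y : Fin q → ℝ |
        ((∃ a : Fin m → ℝ, (∀ e, 0 ≤ a e) ∧
            ∀ i, y i = ∑ e, ((if (ep e).1 = i then (1 : ℝ) else 0)
              + (if (ep e).2 = i then (1 : ℝ) else 0)) / 2 * a e) ∧
          ∀ i, y i ≤ (x i : ℝ)) ∧
        ∀ y' : Fin q → ℝ,
          (∃ a : Fin m → ℝ, (∀ e, 0 ≤ a e) ∧
            ∀ i, y' i = ∑ e, ((if (ep e).1 = i then (1 : ℝ) else 0)
              + (if (ep e).2 = i then (1 : ℝ) else 0)) / 2 * a e) →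
          (∀ i, y' i ≤ (x i : ℝ)) →
          ∑ i, y' i ≤ ∑ i, y i}) :
    ∀ i, ∃ n : ℤ, y i = (n : ℝ) := by
  set total : StrongDual ℝ (Fin q → ℝ) := ∑ i, ContinuousLinearMap.proj i
  have hYx : y ∈ (total.toExposed ((halfIncidence ep).feasibleSet (x ·))).extremePoints ℝ := by
    convert hy using 1
    refine congrArg _ (Set.ext fun z => ?_)
    simp [total, ContinuousLinearMap.toExposed, Matrix.feasibleSet, funext_iff, Pi.le_def,
      halfIncidence, mulVec, dotProduct, eq_comm]
  exact exists_int_eq_of_mem_extremePoints_feasibleSet (fun i => ⟨x i, by simp⟩)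
    (ContinuousLinearMap.toExposed.isExposed.isExtreme.extremePoints_subset_extremePoints hYx)
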